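/- arXiv:math/0702316 — 4 statements merged into one kernel-verified Lean document; each statement's English description precedes it below -/
import Mathlib

section
/- Let M = (E, r) be a matroid, e ∈ E, and N = M \ e. Then the set F₃ of flats F of N such that F ∉ F(M) but F ∪ {e} ∈ F(M), together with the flat E \ {e} if applicable, forms an up-set in the lattice of flats of N: if F ∈ F₃ and G is a flat of N with F ⊆ G, then G ∈ F₃. (Here F(M) denotes the set of flats of M.) -/
variable {α : Type*} [Fintype α] [DecidableEq α]

/-- The matroid rank axioms (R1), (R2), (R3) for an integer-valued rank
function on the subsets of a finite ground set (the whole type `α`). -/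
def RankAxioms (r : Finset α → ℤ) : Prop :=
  (∀ A : Finset α, 0 ≤ r A ∧ r A ≤ (A.card : ℤ)) ∧
  (∀ A B : Finset α, A ⊆ B → r A ≤ r B) ∧
  (∀ A B : Finset α, r (A ∩ B) + r (A ∪ B) ≤ r A + r B)

/-- A flat: adding any element outside `F` strictly increases the rank. -/
def IsFlat (r : Finset α → ℤ) (F : Finset α) : Prop :=
  ∀ x : α, x ∉ F → r F < r (insert x F)

/-- A hyperplane: a flat of rank one less than the rank of the matroid. -/
def IsHyperplane (r : Finset α → ℤ) (H : Finset α) : Prop :=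
  IsFlat r H ∧ r H = r Finset.univ - 1

/-- A circuit: a minimal dependent set. -/
def IsCircuit (r : Finset α → ℤ) (C : Finset α) : Prop :=
  r C < (C.card : ℤ) ∧ ∀ D : Finset α, D ⊂ C → r D = (D.card : ℤ)

/-- A flat of the single-element deletion `M \\ e`: a subset of the ground
set minus `e` such that adding any other element of the ground set minus `e`
strictly increases the (restricted) rank. -/
def IsFlatDel (r : Finset α → ℤ) (e : α) (F : Finset α) : Prop :=
  F ⊆ Finset.univ.erase e ∧
    ∀ x ∈ Finset.univ.erase e, x ∉ F → r F < r (insert x F)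

/-- The rank function of the dual matroid. -/
def dualRank (r : Finset α → ℤ) : Finset α → ℤ :=
  fun A => (A.card : ℤ) + r Aᶜ - r Finset.univ

/-- The class `F₃` of flats of the deletion `M \\ e`: flats `F` of `M \\ e`
such that `F` is not a flat of `M` but `F ∪ {e}` is a flat of `M`. -/
def InF3 (r : Finset α → ℤ) (e : α) (F : Finset α) : Prop :=
  IsFlatDel r e F ∧ ¬ IsFlat r F ∧ IsFlat r (insert e F)

theorem F3_upset (r : Finset α → ℤ) (h : RankAxioms r) (e : α)
    (F G : Finset α) (hF : InF3 r e F ∨ F = Finset.univ.erase e)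
    (hG : IsFlatDel r e G) (hFG : F ⊆ G) :
    InF3 r e G ∨ G = Finset.univ.erase e := by

  rcases hF with hF | rfl
  · left
    obtain ⟨hFdel, hFnot, hFe⟩ := hF
    have hmono := h.2.1
    have hsub := h.2.2
    have hrF : ¬ r F < r (insert e F) := by
      intro hlt
      apply hFnot
      intro x hx
      by_cases hxe : x = e
      · subst hxe; exact hlt
      · exact hFdel.2 x (Finset.mem_erase.2 ⟨hxe, Finset.mem_univ x⟩) hx
    have hrFeq : r (insert e F) = r F :=
      le_antisymm (not_lt.1 hrF) (hmono F _ (Finset.subset_insert e F))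
    have h1 : r F ≤ r (insert e F ∩ G) := by
      apply hmono
      intro x hx
      exact Finset.mem_inter.2 ⟨Finset.subset_insert e F hx, hFG hx⟩
    have hunion : insert e F ∪ G = insert e G := by
      rw [Finset.insert_union, Finset.union_eq_right.2 hFG]
    have h2 := hsub (insert e F) G
    rw [hunion, hrFeq] at h2
    have hGle : r (insert e G) ≤ r G := by linarith
    have heG : e ∉ G := fun hmem => (Finset.mem_erase.1 (hG.1 hmem)).1 rfl
    refine ⟨hG, ?_, ?_⟩
    · intro hflat
      exact absurd (hflat e heG) (not_lt.2 hGle)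
    · intro x hx
      have hxe : x ≠ e := fun hx' => hx (hx' ▸ Finset.mem_insert_self e G)
      have hxG : x ∉ G := fun hx' => hx (Finset.mem_insert_of_mem hx')
      have h3 := hG.2 x (Finset.mem_erase.2 ⟨hxe, Finset.mem_univ x⟩) hxG
      have h4 : r (insert x G) ≤ r (insert x (insert e G)) := by
        apply hmono
        exact Finset.insert_subset_insert x (Finset.subset_insert e G)
      linarith
  · right
    exact Finset.Subset.antisymm hG.1 hFG
end

section
/- Let M = (E, r) be a matroid, e ∈ E, and N = M \ e. The collection F₃ of flats F of N such that F is not a flat of M but F ∪ {e} is a flat of M is closed under intersections of modular pairs: if F, G ∈ F₃ and r(F) + r(G) = r(F ∪ G) + r(F ∩ G), then F ∩ G ∈ F₃. -/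
variable {α : Type*} [Fintype α] [DecidableEq α]

lemma aux_insert (r : Finset α → ℤ) (h : RankAxioms r) {x : α} {A B : Finset α}
    (hAB : A ⊆ B) (hA : r (insert x A) ≤ r A) : r (insert x B) ≤ r B := by
  obtain ⟨h1, h2, h3⟩ := h
  have hsub := h3 (insert x A) B
  have h4 : insert x A ∪ B = insert x B := by
    rw [Finset.insert_union, Finset.union_eq_right.mpr hAB]
  have h5 : A ⊆ insert x A ∩ B := Finset.subset_inter (Finset.subset_insert _ _) hAB
  have h6 := h2 A _ h5
  rw [h4] at hsub
  linarith

lemma rank_insert_e (r : Finset α → ℤ) (h : RankAxioms r) {e : α} {F : Finset α}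
    (hF : InF3 r e F) : r (insert e F) ≤ r F := by
  obtain ⟨⟨hsub, hdel⟩, hnot, _⟩ := hF
  rw [IsFlat] at hnot
  push_neg at hnot
  obtain ⟨x, hxF, hxle⟩ := hnot
  rcases eq_or_ne x e with rfl | hne
  · exact hxle
  · exact absurd hxle (not_le.mpr (hdel x (Finset.mem_erase.mpr ⟨hne, Finset.mem_univ x⟩) hxF))

theorem F3_modular_pair_closed (r : Finset α → ℤ) (h : RankAxioms r) (e : α)
    (F G : Finset α) (hF : InF3 r e F) (hG : InF3 r e G)
    (hmod : r F + r G = r (F ∪ G) + r (F ∩ G)) :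
    InF3 r e (F ∩ G) := by
  obtain ⟨h1, h2, h3⟩ := h
  have heF : e ∉ F := fun he => (Finset.mem_erase.mp (hF.1.1 he)).1 rfl
  have heG : e ∉ G := fun he => (Finset.mem_erase.mp (hG.1.1 he)).1 rfl
  have hrF : r (insert e F) ≤ r F := rank_insert_e r ⟨h1, h2, h3⟩ hF
  have hrG : r (insert e G) ≤ r G := rank_insert_e r ⟨h1, h2, h3⟩ hG
  set H := F ∩ G with hH
  have hinter : insert e F ∩ insert e G = insert e H := by
    rw [hH]; ext y; simp [Finset.mem_insert]; tauto
  have hunion : insert e F ∪ insert e G = insert e (F ∪ G) := by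
    rw [Finset.insert_union, Finset.union_insert, Finset.insert_idem]
  -- rank of insert e H equals rank of H
  have hkey : r (insert e H) ≤ r H := by
    have hsub := h3 (insert e F) (insert e G)
    rw [hinter, hunion] at hsub
    have hmono := h2 (F ∪ G) (insert e (F ∪ G)) (Finset.subset_insert _ _)
    linarith
  have heH : e ∉ H := fun he => heF (Finset.mem_of_mem_inter_left he)
  refine ⟨⟨?_, ?_⟩, ?_, ?_⟩
  · exact (Finset.inter_subset_left).trans hF.1.1
  · intro x hx hxH
    by_contra hle
    push_neg at hle
    rcases not_and_or.mp (fun hc => hxH (Finset.mem_inter.mpr hc)) with hxF | hxG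
    · have := aux_insert r ⟨h1, h2, h3⟩ (Finset.inter_subset_left : H ⊆ F) hle
      exact absurd (hF.1.2 x hx hxF) (not_lt.mpr this)
    · have := aux_insert r ⟨h1, h2, h3⟩ (Finset.inter_subset_right : H ⊆ G) hle
      exact absurd (hG.1.2 x hx hxG) (not_lt.mpr this)
  · intro hflat
    exact absurd (hflat e heH) (not_lt.mpr hkey)
  · intro x hx
    by_contra hle
    push_neg at hle
    have hxe : x ≠ e := fun hxe => hx (hxe ▸ Finset.mem_insert_self e H)
    have hxH : x ∉ H := fun hxH => hx (Finset.mem_insert_of_mem hxH)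
    rcases not_and_or.mp (fun hc => hxH (Finset.mem_inter.mpr hc)) with hxF | hxG
    · have hsub : insert e H ⊆ insert e F :=
        Finset.insert_subset_insert e Finset.inter_subset_left
      have := aux_insert r ⟨h1, h2, h3⟩ hsub hle
      have hxeF : x ∉ insert e F := by
        simp [Finset.mem_insert, hxe, hxF]
      exact absurd (hF.2.2 x hxeF) (not_lt.mpr this)
    · have hsub : insert e H ⊆ insert e G :=
        Finset.insert_subset_insert e Finset.inter_subset_right
      have := aux_insert r ⟨h1, h2, h3⟩ hsub hle
      have hxeG : x ∉ insert e G := by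
        simp [Finset.mem_insert, hxe, hxG]
      exact absurd (hG.2.2 x hxeG) (not_lt.mpr this)
end

section
/- If M = (E, r) is a paving matroid of rank d + 1 ≥ 2 on a finite set E, then the set of hyperplanes of M is a non-trivial d-partition of E: every hyperplane has size at least d, every d-element subset of E is contained in a unique hyperplane, and the set of hyperplanes is not equal to {E}. -/
variable {α : Type*} [Fintype α] [DecidableEq α]

section Aux

variable {r : Finset α → ℤ}

lemma union_cl_le (h : RankAxioms r) (D : Finset α) :
    ∀ S : Finset α, (∀ x ∈ S, r (insert x D) ≤ r D) → r (D ∪ S) ≤ r D := by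
  intro S
  induction S using Finset.induction_on with
  | empty => intro _; simp
  | @insert a S haS ih =>
    intro hS
    have ha : r (insert a D) ≤ r D := hS a (Finset.mem_insert_self a S)
    have h1 := ih (fun x hx => hS x (Finset.mem_insert_of_mem hx))
    have hsub := h.2.2 (D ∪ S) (insert a D)
    have hun : (D ∪ S) ∪ insert a D = insert a (D ∪ S) := by
      ext y
      simp only [Finset.mem_union, Finset.mem_insert]
      tauto
    have hint : D ⊆ (D ∪ S) ∩ insert a D :=
      Finset.subset_inter Finset.subset_union_left (Finset.subset_insert a D)
    have hmono := h.2.1 _ _ hint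
    rw [hun] at hsub
    rw [Finset.union_insert]
    linarith

lemma indep_small (h : RankAxioms r) {d : ℕ} (hrank : r Finset.univ = (d : ℤ) + 1)
    (hpaving : ∀ C : Finset α, IsCircuit r C → r Finset.univ ≤ (C.card : ℤ))
    (S : Finset α) (hS : (S.card : ℤ) ≤ d) : r S = S.card := by
  by_contra hne
  have hlt : r S < S.card := lt_of_le_of_ne ((h.1 S).2) hne
  set T := S.powerset.filter (fun C => r C < (C.card : ℤ)) with hT
  have hST : S ∈ T := by simp [hT, hlt]
  obtain ⟨C, hCT, hmin⟩ := T.exists_min_image Finset.card ⟨S, hST⟩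
  rw [hT, Finset.mem_filter, Finset.mem_powerset] at hCT
  obtain ⟨hCS, hClt⟩ := hCT
  have hcirc : IsCircuit r C := by
    refine ⟨hClt, fun D hD => ?_⟩
    by_contra hDne
    have hDlt : r D < D.card := lt_of_le_of_ne ((h.1 D).2) hDne
    have hDT : D ∈ T := by
      rw [hT, Finset.mem_filter, Finset.mem_powerset]
      exact ⟨hD.subset.trans hCS, hDlt⟩
    exact absurd (Finset.card_lt_card hD) (not_lt.mpr (hmin D hDT))
  have hp := hpaving C hcirc
  rw [hrank] at hp
  have h2 : (C.card : ℤ) ≤ S.card := by exact_mod_cast Finset.card_le_card hCS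
  linarith

end Aux

theorem paving_hyperplanes_dpartition (r : Finset α → ℤ) (h : RankAxioms r)
    (d : ℕ) (hd : 2 ≤ d + 1) (hrank : r Finset.univ = (d : ℤ) + 1)
    (hpaving : ∀ C : Finset α, IsCircuit r C → r Finset.univ ≤ (C.card : ℤ)) :
    (∀ H : Finset α, IsHyperplane r H → d ≤ H.card) ∧
    (∀ D : Finset α, D.card = d → ∃! H : Finset α, IsHyperplane r H ∧ D ⊆ H) ∧
    {H : Finset α | IsHyperplane r H} ≠ {Finset.univ} := by

  have hmono := h.2.1
  have hsubmod := h.2.2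
  refine ⟨?_, ?_, ?_⟩
  · intro H hH
    have h2 := hH.2
    rw [hrank] at h2
    have hle := (h.1 H).2
    have : (d : ℤ) ≤ H.card := by linarith
    exact_mod_cast this
  · intro D hD
    have hrD : r D = (d : ℤ) := by
      have := indep_small h hrank hpaving D (by rw [hD])
      rw [this, hD]
    set F := Finset.univ.filter (fun x => r (insert x D) ≤ r D) with hF
    have hDF : D ⊆ F := by
      intro x hx
      rw [hF, Finset.mem_filter]
      exact ⟨Finset.mem_univ x, le_of_eq (by rw [Finset.insert_eq_self.mpr hx])⟩
    have hFmem : ∀ x ∈ F, r (insert x D) ≤ r D := by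
      intro x hx
      rw [hF, Finset.mem_filter] at hx
      exact hx.2
    have hrF : r F = r D := by
      have h1 : r (D ∪ F) ≤ r D := union_cl_le h D F hFmem
      have h2 : r F ≤ r (D ∪ F) := hmono _ _ Finset.subset_union_right
      have h3 : r D ≤ r F := hmono _ _ hDF
      linarith
    have hflat : IsFlat r F := by
      intro x hx
      have hxc : ¬ r (insert x D) ≤ r D := by
        intro hc
        exact hx (by rw [hF, Finset.mem_filter]; exact ⟨Finset.mem_univ x, hc⟩)
      have h1 : r D + 1 ≤ r (insert x D) := by omega
      have h2 : r (insert x D) ≤ r (insert x F) :=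
        hmono _ _ (Finset.insert_subset_insert x hDF)
      linarith
    have hhyp : IsHyperplane r F := ⟨hflat, by rw [hrF, hrD, hrank]; ring⟩
    refine ⟨F, ⟨hhyp, hDF⟩, ?_⟩
    rintro H ⟨hH, hDH⟩
    have hrH : r H = (d : ℤ) := by have := hH.2; rw [hrank] at this; linarith
    apply Finset.Subset.antisymm
    · intro x hx
      rw [hF, Finset.mem_filter]
      refine ⟨Finset.mem_univ x, ?_⟩
      have h1 : insert x D ⊆ H := Finset.insert_subset hx hDH
      have h2 := hmono _ _ h1
      have h3 : r D ≤ r (insert x D) := hmono _ _ (Finset.subset_insert x D)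
      linarith
    · intro x hx
      rw [hF, Finset.mem_filter] at hx
      by_contra hxH
      have hfl := hH.1 x hxH
      have hsm := hsubmod (insert x D) H
      have hun : insert x D ∪ H = insert x H := by
        ext y
        simp only [Finset.mem_union, Finset.mem_insert]
        constructor
        · rintro (⟨rfl | hy⟩ | hy)
          · exact Or.inl rfl
          · exact Or.inr (hDH hy)
          · exact Or.inr hy
        · rintro (rfl | hy)
          · exact Or.inl (Or.inl rfl)
          · exact Or.inr hy
      have hint : D ⊆ insert x D ∩ H :=
        Finset.subset_inter (Finset.subset_insert x D) hDH
      have h1 := hmono _ _ hint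
      rw [hun] at hsm
      have h2 : r H < r (insert x H) := hfl
      have h3 : r (insert x D) ≤ r D := hx.2
      linarith
  · intro heq
    have huniv : IsHyperplane r (Finset.univ : Finset α) := by
      have := Set.ext_iff.mp heq (Finset.univ : Finset α)
      exact this.mpr rfl
    have := huniv.2
    linarith
end

section
/- If a matroid M = (E, r) is representable over a field F, then for any four subsets A, B, C, D ⊆ E the Ingleton inequality holds: r(A) + r(B) + r(A ∪ B ∪ C) + r(A ∪ B ∪ D) + r(C ∪ D) ≤ r(A ∪ B) + r(A ∪ C) + r(A ∪ D) + r(B ∪ C) + r(B ∪ D). -/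
variable {α : Type*} [Fintype α] [DecidableEq α]

theorem ingleton_inequality (F : Type*) [Field F] (k : ℕ)
    (r : Finset α → ℤ) (ρ : α → (Fin k → F))
    (hrank : r Finset.univ = (k : ℤ))
    (hrep : ∀ A : Finset α,
      r A = (Module.finrank F (Submodule.span F (ρ '' (A : Set α))) : ℤ))
    (A B C D : Finset α) :
    r A + r B + r (A ∪ B ∪ C) + r (A ∪ B ∪ D) + r (C ∪ D) ≤
      r (A ∪ B) + r (A ∪ C) + r (A ∪ D) + r (B ∪ C) + r (B ∪ D) := by
  classical
  have hspan : ∀ X Y : Finset α,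
      Submodule.span F (ρ '' ((X ∪ Y : Finset α) : Set α)) =
        Submodule.span F (ρ '' (X : Set α)) ⊔ Submodule.span F (ρ '' (Y : Set α)) := by
    intro X Y
    rw [Finset.coe_union, Set.image_union, Submodule.span_union]
  set sA := Submodule.span F (ρ '' (A : Set α)) with hsA
  set sB := Submodule.span F (ρ '' (B : Set α)) with hsB
  set sC := Submodule.span F (ρ '' (C : Set α)) with hsC
  set sD := Submodule.span F (ρ '' (D : Set α)) with hsD
  have rA := hrep A
  have rB := hrep B
  have rAB : r (A ∪ B) = (Module.finrank F ↥(sA ⊔ sB) : ℤ) := by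
    rw [hrep (A ∪ B), hspan A B]
  have rAC : r (A ∪ C) = (Module.finrank F ↥(sA ⊔ sC) : ℤ) := by
    rw [hrep (A ∪ C), hspan A C]
  have rAD : r (A ∪ D) = (Module.finrank F ↥(sA ⊔ sD) : ℤ) := by
    rw [hrep (A ∪ D), hspan A D]
  have rBC : r (B ∪ C) = (Module.finrank F ↥(sB ⊔ sC) : ℤ) := by
    rw [hrep (B ∪ C), hspan B C]
  have rBD : r (B ∪ D) = (Module.finrank F ↥(sB ⊔ sD) : ℤ) := by
    rw [hrep (B ∪ D), hspan B D]
  have rCD : r (C ∪ D) = (Module.finrank F ↥(sC ⊔ sD) : ℤ) := by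
    rw [hrep (C ∪ D), hspan C D]
  have rABC : r (A ∪ B ∪ C) = (Module.finrank F ↥(sA ⊔ sB ⊔ sC) : ℤ) := by
    rw [hrep (A ∪ B ∪ C), hspan (A ∪ B) C, hspan A B]
  have rABD : r (A ∪ B ∪ D) = (Module.finrank F ↥(sA ⊔ sB ⊔ sD) : ℤ) := by
    rw [hrep (A ∪ B ∪ D), hspan (A ∪ B) D, hspan A B]
  rw [rA, rB, rAB, rAC, rAD, rBC, rBD, rCD, rABC, rABD]
  set X := (sA ⊔ sC) ⊓ (sB ⊔ sC) with hX
  set Y := (sA ⊔ sD) ⊓ (sB ⊔ sD) with hY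
  have h1 : Module.finrank F ↥(sA ⊔ sB) + Module.finrank F ↥(sA ⊓ sB)
      = Module.finrank F ↥sA + Module.finrank F ↥sB :=
    Submodule.finrank_sup_add_finrank_inf_eq sA sB
  have h2 : Module.finrank F ↥(sA ⊔ sB ⊔ sC) + Module.finrank F ↥X
      = Module.finrank F ↥(sA ⊔ sC) + Module.finrank F ↥(sB ⊔ sC) := by
    have : (sA ⊔ sC) ⊔ (sB ⊔ sC) = sA ⊔ sB ⊔ sC := by
      rw [sup_sup_sup_comm, sup_idem]
    have h := Submodule.finrank_sup_add_finrank_inf_eq (sA ⊔ sC) (sB ⊔ sC)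
    rw [this] at h
    exact h
  have h3 : Module.finrank F ↥(sA ⊔ sB ⊔ sD) + Module.finrank F ↥Y
      = Module.finrank F ↥(sA ⊔ sD) + Module.finrank F ↥(sB ⊔ sD) := by
    have : (sA ⊔ sD) ⊔ (sB ⊔ sD) = sA ⊔ sB ⊔ sD := by
      rw [sup_sup_sup_comm, sup_idem]
    have h := Submodule.finrank_sup_add_finrank_inf_eq (sA ⊔ sD) (sB ⊔ sD)
    rw [this] at h
    exact h
  have h4 : Module.finrank F ↥(X ⊔ Y) + Module.finrank F ↥(X ⊓ Y)
      = Module.finrank F ↥X + Module.finrank F ↥Y :=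
    Submodule.finrank_sup_add_finrank_inf_eq X Y
  have h5 : Module.finrank F ↥(sC ⊔ sD) ≤ Module.finrank F ↥(X ⊔ Y) := by
    apply Submodule.finrank_mono
    apply sup_le_sup
    · exact le_inf le_sup_right le_sup_right
    · exact le_inf le_sup_right le_sup_right
  have h6 : Module.finrank F ↥(sA ⊓ sB) ≤ Module.finrank F ↥(X ⊓ Y) := by
    apply Submodule.finrank_mono
    refine le_inf (le_inf ?_ ?_) (le_inf ?_ ?_)
    · exact le_trans inf_le_left le_sup_left
    · exact le_trans inf_le_right le_sup_left
    · exact le_trans inf_le_left le_sup_left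
    · exact le_trans inf_le_right le_sup_left
  push_cast
  linarith
end
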